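/- arXiv:1205.5617 — 2 statements merged into one kernel-verified Lean document; each statement's English description precedes it below -/
import Mathlib

section
/- Let ν, ν_{f,g}, ν_f, ν_g be finite Borel measures on a measurable space K with ν_{f,g} a signed measure, ν_f, ν_g positive, all absolutely continuous with respect to ν, and suppose |ν_{f,g}(B)| ≤ √(ν_f(B))·√(ν_g(B)) for every Borel set B. Then for all bounded measurable functions h₁, h₂ on K, |∫_K h₁ h₂ dν_{f,g}| ≤ (∫_K h₁² dν_f)^{1/2} (∫_K h₂² dν_g)^{1/2}. -/
open MeasureTheory

/-!
From the set inequality, `2ab · ν_{f,g}(B) ≤ a² ν_f(B) + b² ν_g(B)` for all real `a, b` and Borel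
`B`. For each rational pair `(a, b)` this passes to the Radon–Nikodym densities with respect to
`ν_f + ν_g` almost everywhere, and by density of `ℚ²` a.e. for all real `(a, b)` at once: the
`2 × 2` matrix of densities is positive semidefinite a.e. Substituting `a = t h₁(x)`, `b = h₂(x)`
and integrating gives `2tI ≤ t²P + Q` for every real `t`, where `I = ∫ h₁h₂ dν_{f,g}`,
`P = ∫ h₁² dν_f`, `Q = ∫ h₂² dν_g`; the discriminant of this quadratic gives `I² ≤ PQ`.
-/

lemma two_mul_mul_mul_le_of_abs_le_sqrt_mul_sqrt {a b c : ℝ} (ha : 0 ≤ a) (hb : 0 ≤ b)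
    (h : |c| ≤ √a * √b) (x y : ℝ) : 2 * x * y * c ≤ x ^ 2 * a + y ^ 2 * b := by
  have hsq : (|x| * √a) ^ 2 + (|y| * √b) ^ 2 = x ^ 2 * a + y ^ 2 * b := by
    rw [mul_pow, mul_pow, sq_abs, sq_abs, Real.sq_sqrt ha, Real.sq_sqrt hb]
  calc 2 * x * y * c ≤ 2 * (|x| * |y| * |c|) := by
        rw [← abs_mul, ← abs_mul]; linarith [le_abs_self (x * y * c)]
    _ ≤ 2 * (|x| * |y| * (√a * √b)) := by gcongr
    _ = 2 * (|x| * √a) * (|y| * √b) := by ring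
    _ ≤ x ^ 2 * a + y ^ 2 * b := hsq ▸ two_mul_le_add_sq _ _

lemma two_mul_mul_mul_le_of_forall_rat {a b c : ℝ}
    (h : ∀ x y : ℚ, 2 * x * y * c ≤ (x : ℝ) ^ 2 * a + (y : ℝ) ^ 2 * b) (x y : ℝ) :
    2 * x * y * c ≤ x ^ 2 * a + y ^ 2 * b :=
  Rat.denseRange_cast.induction_on₂ (p := fun x y : ℝ => 2 * x * y * c ≤ x ^ 2 * a + y ^ 2 * b)
    (isClosed_le (by fun_prop) (by fun_prop)) h x y

lemma abs_le_sqrt_mul_sqrt_of_forall_two_mul_le {a b c : ℝ}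
    (h : ∀ t : ℝ, 2 * t * c ≤ t ^ 2 * a + b) : |c| ≤ √a * √b := by
  have hb : 0 ≤ b := by simpa using h 0
  have hdisc : discrim a (-2 * c) b ≤ 0 := discrim_le_zero fun t => by nlinarith [h t]
  rw [← Real.sqrt_mul' a hb]
  exact Real.abs_le_sqrt (by rw [discrim] at hdisc; nlinarith)

lemma integrable_mul_of_abs_le {α : Type*} [MeasurableSpace α] {μ : Measure α} [IsFiniteMeasure μ]
    {f g : α → ℝ} (hf : Measurable f) (hg : Measurable g) {C D : ℝ} (hC : ∀ x, |f x| ≤ C)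
    (hD : ∀ x, |g x| ≤ D) : Integrable (fun x => f x * g x) μ :=
  .of_bound (hf.mul hg).aestronglyMeasurable (C * D) <| ae_of_all _ fun x => by
    rw [Real.norm_eq_abs, abs_mul]
    exact mul_le_mul (hC x) (hD x) (abs_nonneg _) ((abs_nonneg _).trans (hC x))

namespace MeasureTheory.SignedMeasure

variable {α : Type*} [MeasurableSpace α] {ν : Measure α} {s : SignedMeasure α}

lemma toJordanDecomposition_absolutelyContinuous (hs : s ≪ᵥ ν.toENNRealVectorMeasure) :
    s.toJordanDecomposition.posPart ≪ ν ∧ s.toJordanDecomposition.negPart ≪ ν := by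
  rw [← totalVariation_absolutelyContinuous_iff,
    ← VectorMeasure.ennrealToMeasure_toENNRealVectorMeasure ν]
  exact (absolutelyContinuous_ennreal_iff s _).1 hs

variable [SigmaFinite ν]

lemma setIntegral_rnDeriv (hs : s ≪ᵥ ν.toENNRealVectorMeasure) {B : Set α}
    (hB : MeasurableSet B) : ∫ x in B, s.rnDeriv ν x ∂ν = s B := by
  rw [← withDensityᵥ_apply (integrable_rnDeriv s ν) hB, withDensityᵥ_rnDeriv_eq s ν hs]

lemma integrable_rnDeriv_mul (hs : s ≪ᵥ ν.toENNRealVectorMeasure) {g : α → ℝ}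
    (hp : Integrable g s.toJordanDecomposition.posPart)
    (hn : Integrable g s.toJordanDecomposition.negPart) :
    Integrable (fun x => s.rnDeriv ν x * g x) ν := by
  obtain ⟨hacp, hacn⟩ := toJordanDecomposition_absolutelyContinuous hs
  simpa only [rnDeriv_def, sub_mul, Pi.sub_def] using
    ((integrable_toReal_rnDeriv_mul_iff hacp).2 hp).sub
      ((integrable_toReal_rnDeriv_mul_iff hacn).2 hn)

lemma integral_posPart_sub_integral_negPart (hs : s ≪ᵥ ν.toENNRealVectorMeasure) {g : α → ℝ}
    (hp : Integrable g s.toJordanDecomposition.posPart)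
    (hn : Integrable g s.toJordanDecomposition.negPart) :
    ∫ x, g x ∂s.toJordanDecomposition.posPart - ∫ x, g x ∂s.toJordanDecomposition.negPart =
      ∫ x, s.rnDeriv ν x * g x ∂ν := by
  obtain ⟨hacp, hacn⟩ := toJordanDecomposition_absolutelyContinuous hs
  rw [← integral_toReal_rnDeriv_mul hacp, ← integral_toReal_rnDeriv_mul hacn,
    ← integral_sub ((integrable_toReal_rnDeriv_mul_iff hacp).2 hp)
      ((integrable_toReal_rnDeriv_mul_iff hacn).2 hn)]
  simp only [rnDeriv_def, sub_mul]

variable {μ₁ μ₂ : Measure α} [IsFiniteMeasure μ₁] [IsFiniteMeasure μ₂]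

lemma ae_const_mul_rnDeriv_le (hs : s ≪ᵥ ν.toENNRealVectorMeasure) (h₁ : μ₁ ≪ ν) (h₂ : μ₂ ≪ ν)
    {a b c : ℝ} (h : ∀ B, MeasurableSet B → c * s B ≤ a * μ₁.real B + b * μ₂.real B) :
    ∀ᵐ x ∂ν, c * s.rnDeriv ν x ≤
      a * (μ₁.rnDeriv ν x).toReal + b * (μ₂.rnDeriv ν x).toReal := by
  have hi₁ := (Measure.integrable_toReal_rnDeriv (μ := μ₁) (ν := ν)).const_mul a
  have hi₂ := (Measure.integrable_toReal_rnDeriv (μ := μ₂) (ν := ν)).const_mul b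
  refine ae_le_of_forall_setIntegral_le ((integrable_rnDeriv s ν).const_mul c) (hi₁.add hi₂)
    fun B hB _ => ?_
  rw [integral_const_mul, setIntegral_rnDeriv hs hB, integral_add hi₁.integrableOn hi₂.integrableOn,
    integral_const_mul, integral_const_mul, Measure.setIntegral_toReal_rnDeriv h₁,
    Measure.setIntegral_toReal_rnDeriv h₂]
  exact h B hB

lemma ae_two_mul_mul_mul_rnDeriv_le (hs : s ≪ᵥ ν.toENNRealVectorMeasure) (h₁ : μ₁ ≪ ν)
    (h₂ : μ₂ ≪ ν) (hCS : ∀ B, MeasurableSet B → |s B| ≤ √(μ₁.real B) * √(μ₂.real B)) :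
    ∀ᵐ x ∂ν, ∀ a b : ℝ, 2 * a * b * s.rnDeriv ν x ≤
      a ^ 2 * (μ₁.rnDeriv ν x).toReal + b ^ 2 * (μ₂.rnDeriv ν x).toReal := by
  have hrat (q : ℚ × ℚ) : ∀ᵐ x ∂ν, 2 * q.1 * q.2 * s.rnDeriv ν x ≤
      (q.1 : ℝ) ^ 2 * (μ₁.rnDeriv ν x).toReal + (q.2 : ℝ) ^ 2 * (μ₂.rnDeriv ν x).toReal :=
    ae_const_mul_rnDeriv_le hs h₁ h₂ fun B hB =>
      two_mul_mul_mul_le_of_abs_le_sqrt_mul_sqrt measureReal_nonneg measureReal_nonneg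
        (hCS B hB) _ _
  filter_upwards [ae_all_iff.2 hrat] with x hx
  exact two_mul_mul_mul_le_of_forall_rat fun p q => hx (p, q)

theorem abs_integral_posPart_sub_integral_negPart_le (hs : s ≪ᵥ ν.toENNRealVectorMeasure)
    (h₁ : μ₁ ≪ ν) (h₂ : μ₂ ≪ ν)
    (hCS : ∀ B, MeasurableSet B → |s B| ≤ √(μ₁.real B) * √(μ₂.real B)) {g₁ g₂ : α → ℝ}
    (hp : Integrable (fun x => g₁ x * g₂ x) s.toJordanDecomposition.posPart)
    (hn : Integrable (fun x => g₁ x * g₂ x) s.toJordanDecomposition.negPart)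
    (hi₁ : Integrable (fun x => g₁ x ^ 2) μ₁) (hi₂ : Integrable (fun x => g₂ x ^ 2) μ₂) :
    |∫ x, g₁ x * g₂ x ∂s.toJordanDecomposition.posPart
        - ∫ x, g₁ x * g₂ x ∂s.toJordanDecomposition.negPart|
      ≤ √(∫ x, g₁ x ^ 2 ∂μ₁) * √(∫ x, g₂ x ^ 2 ∂μ₂) := by
  rw [integral_posPart_sub_integral_negPart hs hp hn]
  refine abs_le_sqrt_mul_sqrt_of_forall_two_mul_le fun t => ?_
  have hf₁ := ((integrable_toReal_rnDeriv_mul_iff h₁).2 hi₁).const_mul (t ^ 2)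
  have hf₂ := (integrable_toReal_rnDeriv_mul_iff h₂).2 hi₂
  rw [← integral_toReal_rnDeriv_mul h₁, ← integral_toReal_rnDeriv_mul h₂,
    ← integral_const_mul, ← integral_const_mul, ← integral_add hf₁ hf₂]
  refine integral_mono_ae ((integrable_rnDeriv_mul hs hp hn).const_mul _) (hf₁.add hf₂) ?_
  filter_upwards [ae_two_mul_mul_mul_rnDeriv_le hs h₁ h₂ hCS] with x hx
  calc 2 * t * (s.rnDeriv ν x * (g₁ x * g₂ x))
      = 2 * (t * g₁ x) * g₂ x * s.rnDeriv ν x := by ring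
    _ ≤ (t * g₁ x) ^ 2 * (μ₁.rnDeriv ν x).toReal + g₂ x ^ 2 * (μ₂.rnDeriv ν x).toReal := hx _ _
    _ = t ^ 2 * ((μ₁.rnDeriv ν x).toReal * g₁ x ^ 2) + (μ₂.rnDeriv ν x).toReal * g₂ x ^ 2 := by
        ring

end MeasureTheory.SignedMeasure

theorem stmt_8_general {K : Type*} [MeasurableSpace K]
    (νfg : MeasureTheory.SignedMeasure K)
    (νf νg : Measure K) [IsFiniteMeasure νf] [IsFiniteMeasure νg]
    (hCS : ∀ B : Set K, MeasurableSet B →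
      |νfg B| ≤ Real.sqrt ((νf B).toReal) * Real.sqrt ((νg B).toReal))
    (h₁ h₂ : K → ℝ) (hm₁ : Measurable h₁) (hm₂ : Measurable h₂)
    (C₁ : ℝ) (hb₁ : ∀ x, |h₁ x| ≤ C₁) (C₂ : ℝ) (hb₂ : ∀ x, |h₂ x| ≤ C₂) :
    |(∫ x, h₁ x * h₂ x ∂νfg.toJordanDecomposition.posPart)
        - ∫ x, h₁ x * h₂ x ∂νfg.toJordanDecomposition.negPart|
      ≤ Real.sqrt (∫ x, (h₁ x) ^ 2 ∂νf) * Real.sqrt (∫ x, (h₂ x) ^ 2 ∂νg) := by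
  have hs : νfg ≪ᵥ (νf + νg).toENNRealVectorMeasure :=
    VectorMeasure.AbsolutelyContinuous.mk fun B hB h0 => by
      rw [Measure.toENNRealVectorMeasure_apply_measurable hB, Measure.add_apply,
        add_eq_zero] at h0
      simpa [h0.1, h0.2] using hCS B hB
  have hsq (h : K → ℝ) (hm : Measurable h) {C : ℝ} (hb : ∀ x, |h x| ≤ C) (μ : Measure K)
      [IsFiniteMeasure μ] : Integrable (fun x => h x ^ 2) μ := by
    simpa only [sq] using integrable_mul_of_abs_le hm hm hb hb
  exact SignedMeasure.abs_integral_posPart_sub_integral_negPart_le hs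
    (Measure.AbsolutelyContinuous.rfl.add_right νg)
    (Measure.AbsolutelyContinuous.rfl.add_right' νf) hCS
    (integrable_mul_of_abs_le hm₁ hm₂ hb₁ hb₂) (integrable_mul_of_abs_le hm₁ hm₂ hb₁ hb₂)
    (hsq h₁ hm₁ hb₁ νf) (hsq h₂ hm₂ hb₂ νg)

theorem stmt_8 {K : Type*} [MeasurableSpace K]
    (ν : Measure K) [SigmaFinite ν]
    (νfg : MeasureTheory.SignedMeasure K)
    (νf νg : Measure K) [IsFiniteMeasure νf] [IsFiniteMeasure νg]
    (hacfg : ∀ B : Set K, MeasurableSet B → ν B = 0 → νfg B = 0)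
    (hacf : νf ≪ ν) (hacg : νg ≪ ν)
    (hCS : ∀ B : Set K, MeasurableSet B →
      |νfg B| ≤ Real.sqrt ((νf B).toReal) * Real.sqrt ((νg B).toReal))
    (h₁ h₂ : K → ℝ) (hm₁ : Measurable h₁) (hm₂ : Measurable h₂)
    (C₁ : ℝ) (hb₁ : ∀ x, |h₁ x| ≤ C₁) (C₂ : ℝ) (hb₂ : ∀ x, |h₂ x| ≤ C₂) :
    |(∫ x, h₁ x * h₂ x ∂νfg.toJordanDecomposition.posPart)
        - ∫ x, h₁ x * h₂ x ∂νfg.toJordanDecomposition.negPart|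
      ≤ Real.sqrt (∫ x, (h₁ x) ^ 2 ∂νf) * Real.sqrt (∫ x, (h₂ x) ^ 2 ∂νg) :=
  stmt_8_general νfg νf νg hCS h₁ h₂ hm₁ hm₂ C₁ hb₁ C₂ hb₂
end

section
/- Let μ be a finite measure on a space K, E a nonnegative quadratic form on a function space F ⊂ L²(K,μ) satisfying the Poincaré inequality ‖f − ∫_K f dμ‖²_{L²} ≤ c·E(f) for all f ∈ F (with μ(K)=1). Let A ⊂ K be measurable with μ(K∖A) = a > 0. Then every f ∈ F vanishing a.e. on K∖A satisfies ‖f‖²_{L²(K,μ)} ≤ (c + 2c/a)·E(f). -/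
/-!
By the Poincaré inequality the variance of `f` is at most `c E(f)`, and `∫ f² = Var f + (∫ f)²`.
The mean is controlled by Chebyshev: on `Aᶜ`, where `f = 0`, the deviation `(f - ∫ f)²` equals
`(∫ f)²`, so `a (∫ f)² ≤ Var f ≤ c E(f)`.
-/

open MeasureTheory ProbabilityTheory

theorem measureReal_mul_sq_integral_le_variance {Ω : Type*} [MeasurableSpace Ω] {μ : Measure Ω}
    [IsFiniteMeasure μ] {X : Ω → ℝ} (hX : MemLp X 2 μ) {S : Set Ω}
    (hS : ∀ᵐ ω ∂μ, ω ∈ S → X ω = 0) :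
    μ.real S * μ[X] ^ 2 ≤ Var[X; μ] := by
  set m := μ[X]
  have hS_sub : S ≤ᵐ[μ] {ω | m ^ 2 ≤ (X ω - m) ^ 2} := by
    filter_upwards [hS] with ω hω hωS
    show m ^ 2 ≤ (X ω - m) ^ 2
    rw [hω hωS, zero_sub, neg_sq]
  rw [variance_eq_integral hX.aemeasurable, mul_comm]
  calc m ^ 2 * μ.real S ≤ m ^ 2 * μ.real {ω | m ^ 2 ≤ (X ω - m) ^ 2} :=
        mul_le_mul_of_nonneg_left
          (ENNReal.toReal_mono (measure_ne_top _ _) (measure_mono_ae hS_sub)) (sq_nonneg m)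
    _ ≤ ∫ ω, (X ω - m) ^ 2 ∂μ :=
        mul_meas_ge_le_integral_of_nonneg (.of_forall fun _ ↦ sq_nonneg _)
          (hX.sub (memLp_const m)).integrable_sq _

theorem stmt_9_general {K : Type*} [MeasurableSpace K] (μ : Measure K)
    [IsProbabilityMeasure μ]
    (F : Set (K → ℝ)) (E : (K → ℝ) → ℝ)
    (c : ℝ)
    (hPoincare : ∀ f ∈ F,
      ∫ x, (f x - ∫ y, f y ∂μ) ^ 2 ∂μ ≤ c * E f)
    (A : Set K)
    (a : ℝ) (ha : a = (μ Aᶜ).toReal) (hapos : 0 < a)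
    (f : K → ℝ) (hfF : f ∈ F) (hf2 : MemLp f 2 μ)
    (hvanish : ∀ᵐ x ∂μ, x ∈ Aᶜ → f x = 0) :
    ∫ x, (f x) ^ 2 ∂μ ≤ (c + 2 * c / a) * E f := by
  have hvar : Var[f; μ] ≤ c * E f := by
    rw [variance_eq_integral hf2.aemeasurable]
    exact hPoincare f hfF
  have hmean : a * μ[f] ^ 2 ≤ c * E f :=
    ha ▸ (measureReal_mul_sq_integral_le_variance hf2 hvanish).trans hvar
  have hsq : ∫ x, (f x) ^ 2 ∂μ = Var[f; μ] + μ[f] ^ 2 := by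
    rw [variance_eq_sub hf2]
    simp only [Pi.pow_apply]
    ring
  have hcE : 0 ≤ c * E f := (variance_nonneg f μ).trans hvar
  have hmean' : μ[f] ^ 2 ≤ 2 * c / a * E f := by
    rw [div_mul_eq_mul_div, le_div_iff₀ hapos]
    nlinarith
  rw [hsq, add_mul]
  exact add_le_add hvar hmean'

theorem stmt_9 {K : Type*} [MeasurableSpace K] (μ : Measure K)
    [IsProbabilityMeasure μ]
    (F : Set (K → ℝ)) (E : (K → ℝ) → ℝ) (hEnn : ∀ f, 0 ≤ E f)
    (c : ℝ) (hc : 0 < c)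
    (hPoincare : ∀ f ∈ F,
      ∫ x, (f x - ∫ y, f y ∂μ) ^ 2 ∂μ ≤ c * E f)
    (A : Set K) (hA : MeasurableSet A)
    (a : ℝ) (ha : a = (μ Aᶜ).toReal) (hapos : 0 < a)
    (f : K → ℝ) (hfF : f ∈ F) (hf2 : MemLp f 2 μ)
    (hvanish : ∀ᵐ x ∂μ, x ∈ Aᶜ → f x = 0) :
    ∫ x, (f x) ^ 2 ∂μ ≤ (c + 2 * c / a) * E f :=
  stmt_9_general μ F E c hPoincare A a ha hapos f hfF hf2 hvanish
end
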